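/- Let (g,N) be a Nijenhuis Leibniz algebra over a field of characteristic 0 and let (V,l,r,N_V) be a representation of (g,N). Define l'(x,u) := l(N(x),u) − N_V(l(x,u)) + l(x,N_V(u)) and r'(u,x) := r(u,N(x)) − N_V(r(u,x)) + r(N_V(u),x) for x ∈ g, u ∈ V, and define [x,y]_* := [N(x),y] + [x,N(y)] − N([x,y]). Then (V,l',r',N_V) is a representation of the Nijenhuis Leibniz algebra (g,[·,·]_*,N); that is: (i) l'(x,l'(y,u)) = l'([x,y]_*,u) + l'(y,l'(x,u)), (ii) l'(x,r'(u,y)) = r'(l'(x,u),y) + r'(u,[x,y]_*), (iii) r'(u,[x,y]_*) = r'(r'(u,x),y) + l'(x,r'(u,y)), (iv) l'(N(x),N_V(u)) = N_V(l'(N(x),u) + l'(x,N_V(u)) − N_V(l'(x,u))), and (v) r'(N_V(u),N(x)) = N_V(r'(N_V(u),x) + r'(u,N(x)) − N_V(r'(u,x))), for all x,y ∈ g and u ∈ V. -/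

import Mathlib

/-!
The semidirect product bracket `[(x, u), (y, v)] = ([x, y], l(x, v) + r(u, y))` on `g × V` is
Leibniz because `(V, l, r)` is a representation, and `N ⊕ N_V` is Nijenhuis for it because
`(V, l, r, N_V)` is a representation of `(g, N)`. Deforming a Nijenhuis Leibniz algebra by its
Nijenhuis operator gives again a Nijenhuis Leibniz algebra, and the deformation of the semidirect
product bracket is the semidirect product bracket built from `[·,·]_*`, `l'` and `r'`.
So (i)–(v) are the `V`-components of the Leibniz and Nijenhuis identities of the deformed bracket.
-/

section

variable {K : Type*} [Field K] {g V : Type*} [AddCommGroup g] [Module K g]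
  [AddCommGroup V] [Module K V]

/-- The deformed bracket `[x,y]_* = [N x, y] + [x, N y] - N [x, y]`. -/
def starBracket (br : g →ₗ[K] g →ₗ[K] g) (N : g →ₗ[K] g) (x y : g) : g :=
  br (N x) y + br x (N y) - N (br x y)

/-- The deformed left action `l'(x,u) = l(N x, u) - N_V(l(x,u)) + l(x, N_V u)`. -/
def lStar (l : g →ₗ[K] V →ₗ[K] V) (N : g →ₗ[K] g) (Nv : V →ₗ[K] V)
    (x : g) (u : V) : V :=
  l (N x) u - Nv (l x u) + l x (Nv u)

/-- The deformed right action `r'(u,x) = r(u, N x) - N_V(r(u,x)) + r(N_V u, x)`. -/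
def rStar (r : V →ₗ[K] g →ₗ[K] V) (N : g →ₗ[K] g) (Nv : V →ₗ[K] V)
    (u : V) (x : g) : V :=
  r u (N x) - Nv (r u x) + r (Nv u) x

end

namespace LinearMap

variable {R M : Type*} [CommRing R] [AddCommGroup M] [Module R M]

def IsLeibniz (B : M →ₗ[R] M →ₗ[R] M) : Prop :=
  ∀ x y z, B x (B y z) = B (B x y) z + B y (B x z)

def IsNijenhuis (B : M →ₗ[R] M →ₗ[R] M) (N : M →ₗ[R] M) : Prop :=
  ∀ x y, B (N x) (N y) = N (B (N x) y + B x (N y) - N (B x y))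

def deformed (B : M →ₗ[R] M →ₗ[R] M) (N : M →ₗ[R] M) : M →ₗ[R] M →ₗ[R] M :=
  B.comp N + B.compl₂ N - B.compr₂ N

variable {B : M →ₗ[R] M →ₗ[R] M} {N : M →ₗ[R] M}

theorem deformed_apply (x y : M) :
    deformed B N x y = B (N x) y + B x (N y) - N (B x y) := rfl

theorem IsNijenhuis.map_deformed (hN : IsNijenhuis B N) (x y : M) :
    N (deformed B N x y) = B (N x) (N y) :=
  (hN x y).symm

theorem IsNijenhuis.deformed (hN : IsNijenhuis B N) : IsNijenhuis (deformed B N) N := by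
  intro x y
  rw [map_sub, map_add, hN.map_deformed, hN.map_deformed, hN.map_deformed, deformed_apply]

theorem IsLeibniz.deformed (hB : IsLeibniz B) (hN : IsNijenhuis B N) :
    IsLeibniz (deformed B N) := by
  intro x y z
  simp only [deformed_apply]
  rw [← hN y z, ← hN x y, ← hN x z]
  -- The Leibniz defect of the deformed bracket is a combination of Leibniz defects of `B`
  -- at arguments shifted by `N` and of Nijenhuis identities.
  linear_combination (norm := skip)
    hB (N x) (N y) z + hB (N x) y (N z) + hB x (N y) (N z)
      - congrArg N (hB (N x) y z) - congrArg N (hB x (N y) z) - congrArg N (hB x y (N z))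
      + congrArg (N ∘ N) (hB x y z)
      - hN x (B y z) + hN (B x y) z + hN y (B x z)
  simp only [Function.comp_apply, map_add, map_sub, add_apply, sub_apply]
  abel

end LinearMap

open LinearMap

section Semidirect

variable {R g V : Type*} [CommRing R] [AddCommGroup g] [Module R g]
  [AddCommGroup V] [Module R V]

def semidirectBracket (br : g →ₗ[R] g →ₗ[R] g) (l : g →ₗ[R] V →ₗ[R] V)
    (r : V →ₗ[R] g →ₗ[R] V) : g × V →ₗ[R] g × V →ₗ[R] g × V :=
  (br.compl₁₂ (fst R g V) (fst R g V)).compr₂ (inl R g V) +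
    (l.compl₁₂ (fst R g V) (snd R g V) + r.compl₁₂ (snd R g V) (fst R g V)).compr₂ (inr R g V)

variable {br : g →ₗ[R] g →ₗ[R] g} {l : g →ₗ[R] V →ₗ[R] V} {r : V →ₗ[R] g →ₗ[R] V}
  {N : g →ₗ[R] g} {Nv : V →ₗ[R] V}

@[simp]
theorem semidirectBracket_apply (p q : g × V) :
    semidirectBracket br l r p q = (br p.1 q.1, l p.1 q.2 + r p.2 q.1) := by
  simp [semidirectBracket]

theorem isLeibniz_semidirectBracket (hbr : IsLeibniz br)
    (hl : ∀ x y u, l x (l y u) = l (br x y) u + l y (l x u))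
    (hlr : ∀ x y u, l x (r u y) = r (l x u) y + r u (br x y))
    (hr : ∀ x y u, r u (br x y) = r (r u x) y + l x (r u y)) :
    IsLeibniz (semidirectBracket br l r) := by
  rintro ⟨x, u⟩ ⟨y, v⟩ ⟨z, w⟩
  simp only [semidirectBracket_apply, map_add, LinearMap.add_apply, Prod.mk_add_mk, hbr x y z,
    hl x y w, hlr x z v, hr y z u]
  congr 1
  abel

theorem isNijenhuis_semidirectBracket_prodMap (hN : IsNijenhuis br N)
    (hl : ∀ x u, l (N x) (Nv u) = Nv (l (N x) u + l x (Nv u) - Nv (l x u)))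
    (hr : ∀ x u, r (Nv u) (N x) = Nv (r (Nv u) x + r u (N x) - Nv (r u x))) :
    IsNijenhuis (semidirectBracket br l r) (N.prodMap Nv) := by
  rintro ⟨x, u⟩ ⟨y, v⟩
  simp only [semidirectBracket_apply, prodMap_apply, Prod.mk_add_mk, Prod.mk_sub_mk, hN x y,
    hl x v, hr y u, map_add, map_sub]
  congr 1
  abel

end Semidirect

section Deformation

variable {K g V : Type*} [Field K] [AddCommGroup g] [Module K g] [AddCommGroup V] [Module K V]
  {br : g →ₗ[K] g →ₗ[K] g} {l : g →ₗ[K] V →ₗ[K] V} {r : V →ₗ[K] g →ₗ[K] V}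
  {N : g →ₗ[K] g} {Nv : V →ₗ[K] V}

@[simp]
theorem deformed_semidirectBracket_inl_inr (x : g) (u : V) :
    deformed (semidirectBracket br l r) (N.prodMap Nv) (x, 0) (0, u) = (0, lStar l N Nv x u) := by
  simp only [deformed_apply, prodMap_apply, map_zero, semidirectBracket_apply, add_zero,
    Prod.mk_add_mk, Prod.mk_sub_mk, sub_self, lStar, Prod.mk.injEq, true_and]
  abel

@[simp]
theorem deformed_semidirectBracket_inr_inl (u : V) (x : g) :
    deformed (semidirectBracket br l r) (N.prodMap Nv) (0, u) (x, 0) = (0, rStar r N Nv u x) := by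
  simp only [deformed_apply, prodMap_apply, map_zero, semidirectBracket_apply, LinearMap.zero_apply,
    zero_add, add_zero, Prod.mk_add_mk, Prod.mk_sub_mk, sub_self, rStar, Prod.mk.injEq, true_and]
  abel

@[simp]
theorem deformed_semidirectBracket_inl_inl (x y : g) :
    deformed (semidirectBracket br l r) (N.prodMap Nv) (x, 0) (y, 0) =
      (starBracket br N x y, 0) := by
  simp [deformed_apply, starBracket]

end Deformation

theorem star_representation_general {K : Type*} [Field K]
    {g V : Type*} [AddCommGroup g] [Module K g] [AddCommGroup V] [Module K V]
    (br : g →ₗ[K] g →ₗ[K] g)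
    (leibniz : ∀ x y z : g, br x (br y z) = br (br x y) z + br y (br x z))
    (N : g →ₗ[K] g)
    (nijenhuis : ∀ x y : g,
      br (N x) (N y) = N (br (N x) y + br x (N y) - N (br x y)))
    (l : g →ₗ[K] V →ₗ[K] V) (r : V →ₗ[K] g →ₗ[K] V) (Nv : V →ₗ[K] V)
    (rep₁ : ∀ (x y : g) (u : V), l x (l y u) = l (br x y) u + l y (l x u))
    (rep₂ : ∀ (x y : g) (u : V), l x (r u y) = r (l x u) y + r u (br x y))
    (rep₃ : ∀ (x y : g) (u : V), r u (br x y) = r (r u x) y + l x (r u y))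
    (nrep₁ : ∀ (x : g) (u : V),
      l (N x) (Nv u) = Nv (l (N x) u + l x (Nv u) - Nv (l x u)))
    (nrep₂ : ∀ (x : g) (u : V),
      r (Nv u) (N x) = Nv (r (Nv u) x + r u (N x) - Nv (r u x))) :
    (∀ (x y : g) (u : V),
      lStar l N Nv x (lStar l N Nv y u) =
        lStar l N Nv (starBracket br N x y) u + lStar l N Nv y (lStar l N Nv x u)) ∧
    (∀ (x y : g) (u : V),
      lStar l N Nv x (rStar r N Nv u y) =
        rStar r N Nv (lStar l N Nv x u) y + rStar r N Nv u (starBracket br N x y)) ∧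
    (∀ (x y : g) (u : V),
      rStar r N Nv u (starBracket br N x y) =
        rStar r N Nv (rStar r N Nv u x) y + lStar l N Nv x (rStar r N Nv u y)) ∧
    (∀ (x : g) (u : V),
      lStar l N Nv (N x) (Nv u) =
        Nv (lStar l N Nv (N x) u + lStar l N Nv x (Nv u) - Nv (lStar l N Nv x u))) ∧
    (∀ (x : g) (u : V),
      rStar r N Nv (Nv u) (N x) =
        Nv (rStar r N Nv (Nv u) x + rStar r N Nv u (N x) - Nv (rStar r N Nv u x))) := by
  have hNij := isNijenhuis_semidirectBracket_prodMap nijenhuis nrep₁ nrep₂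
  have hLeib := (isLeibniz_semidirectBracket leibniz rep₁ rep₂ rep₃).deformed hNij
  refine ⟨fun x y u => ?_, fun x y u => ?_, fun x y u => ?_, fun x u => ?_, fun x u => ?_⟩
  · simpa using congrArg Prod.snd (hLeib (x, 0) (y, 0) (0, u))
  · simpa using congrArg Prod.snd (hLeib (x, 0) (0, u) (y, 0))
  · simpa using congrArg Prod.snd (hLeib (0, u) (x, 0) (y, 0))
  · simpa using congrArg Prod.snd (hNij.deformed (x, 0) (0, u))
  · simpa using congrArg Prod.snd (hNij.deformed (0, u) (x, 0))

/-- If `(V, l, r, N_V)` is a representation of a Nijenhuis Leibniz algebra `(g, N)`,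
then `(V, l', r', N_V)` is a representation of the Nijenhuis Leibniz algebra
`(g, [·,·]_*, N)`. -/
theorem star_representation {K : Type*} [Field K] [CharZero K]
    {g V : Type*} [AddCommGroup g] [Module K g] [AddCommGroup V] [Module K V]
    (br : g →ₗ[K] g →ₗ[K] g)
    (leibniz : ∀ x y z : g, br x (br y z) = br (br x y) z + br y (br x z))
    (N : g →ₗ[K] g)
    (nijenhuis : ∀ x y : g,
      br (N x) (N y) = N (br (N x) y + br x (N y) - N (br x y)))
    (l : g →ₗ[K] V →ₗ[K] V) (r : V →ₗ[K] g →ₗ[K] V) (Nv : V →ₗ[K] V)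
    (rep₁ : ∀ (x y : g) (u : V), l x (l y u) = l (br x y) u + l y (l x u))
    (rep₂ : ∀ (x y : g) (u : V), l x (r u y) = r (l x u) y + r u (br x y))
    (rep₃ : ∀ (x y : g) (u : V), r u (br x y) = r (r u x) y + l x (r u y))
    (nrep₁ : ∀ (x : g) (u : V),
      l (N x) (Nv u) = Nv (l (N x) u + l x (Nv u) - Nv (l x u)))
    (nrep₂ : ∀ (x : g) (u : V),
      r (Nv u) (N x) = Nv (r (Nv u) x + r u (N x) - Nv (r u x))) :
    (∀ (x y : g) (u : V),
      lStar l N Nv x (lStar l N Nv y u) =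
        lStar l N Nv (starBracket br N x y) u + lStar l N Nv y (lStar l N Nv x u)) ∧
    (∀ (x y : g) (u : V),
      lStar l N Nv x (rStar r N Nv u y) =
        rStar r N Nv (lStar l N Nv x u) y + rStar r N Nv u (starBracket br N x y)) ∧
    (∀ (x y : g) (u : V),
      rStar r N Nv u (starBracket br N x y) =
        rStar r N Nv (rStar r N Nv u x) y + lStar l N Nv x (rStar r N Nv u y)) ∧
    (∀ (x : g) (u : V),
      lStar l N Nv (N x) (Nv u) =
        Nv (lStar l N Nv (N x) u + lStar l N Nv x (Nv u) - Nv (lStar l N Nv x u))) ∧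
    (∀ (x : g) (u : V),
      rStar r N Nv (Nv u) (N x) =
        Nv (rStar r N Nv (Nv u) x + rStar r N Nv u (N x) - Nv (rStar r N Nv u x))) :=
  star_representation_general br leibniz N nijenhuis l r Nv rep₁ rep₂ rep₃ nrep₁ nrep₂
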